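/- arXiv:2605.10558 — 4 statements merged into one kernel-verified Lean document; each statement's English description precedes it below -/
import Mathlib

section
/- Let G be a finite simple undirected graph with Laplacian matrix L, and let S₁ and S₂ be two nonempty disjoint subsets of the vertex set of G. Then the second-smallest eigenvalue λ₂ of L satisfies λ₂(G) ≤ cut(S₁, S₁ᶜ)/|S₁| + cut(S₂, S₂ᶜ)/|S₂|, where cut(S, Sᶜ) denotes the number of edges with one endpoint in S and the other in its complement. -/
open Matrix

/-- The list of eigenvalues of a Hermitian matrix, sorted in increasing order. -/
noncomputable def eigList {V : Type} [Fintype V] [DecidableEq V]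
    {M : Matrix V V ℝ} (h : M.IsHermitian) : List ℝ :=
  Multiset.sort (Finset.univ.val.map h.eigenvalues) (· ≤ ·)

/-- The second-smallest eigenvalue (with multiplicity) of a Hermitian matrix. -/
noncomputable def lambda2 {V : Type} [Fintype V] [DecidableEq V]
    {M : Matrix V V ℝ} (h : M.IsHermitian) : ℝ :=
  (eigList h).getD 1 0

/-- `cut G S T` is the number of edges of `G` with one endpoint in `S` and the other in `T`. -/
def cut {V : Type} [Fintype V] [DecidableEq V] (G : SimpleGraph V) [DecidableRel G.Adj]
    (S T : Finset V) : ℕ :=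
  ((S ×ˢ T).filter fun p => G.Adj p.1 p.2).card

section Aux

variable {V : Type} [Fintype V] [DecidableEq V]

lemma aux_sum_cut (G : SimpleGraph V) [DecidableRel G.Adj] (S T : Finset V) (c : ℝ) :
    ∑ i ∈ S, ∑ j ∈ T, (if G.Adj i j then c else 0) = c * cut G S T := by
  rw [← Finset.sum_product']
  rw [Finset.sum_ite, Finset.sum_const_zero, add_zero, Finset.sum_const, cut]
  simp [mul_comm]

lemma aux_cut_comm (G : SimpleGraph V) [DecidableRel G.Adj] (S T : Finset V) :
    cut G S T = cut G T S := by
  unfold cut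
  apply Finset.card_bij' (fun p _ => (p.2, p.1)) (fun p _ => (p.2, p.1)) <;>
    simp +contextual [G.adj_comm, and_comm]

lemma aux_cut_union (G : SimpleGraph V) [DecidableRel G.Adj] (S T₁ T₂ : Finset V)
    (h : Disjoint T₁ T₂) : (cut G S (T₁ ∪ T₂) : ℝ) = cut G S T₁ + cut G S T₂ := by
  have key : ∀ T : Finset V,
      (cut G S T : ℝ) = ∑ i ∈ S, ∑ j ∈ T, (if G.Adj i j then (1:ℝ) else 0) := fun T => by
    rw [aux_sum_cut, one_mul]
  rw [key, key, key, ← Finset.sum_add_distrib]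
  exact Finset.sum_congr rfl fun i _ => Finset.sum_union h

lemma aux_quadform_ge {M : Matrix V V ℝ} (h : M.IsHermitian) (c : ℝ) (i₀ : V)
    (hc : ∀ i, i ≠ i₀ → c ≤ h.eigenvalues i) (x : V → ℝ)
    (hx : ∑ v, (h.eigenvectorUnitary : Matrix V V ℝ) v i₀ * x v = 0) :
    c * (x ⬝ᵥ x) ≤ x ⬝ᵥ (M *ᵥ x) := by
  set U : Matrix V V ℝ := (h.eigenvectorUnitary : Matrix V V ℝ) with hU
  have hUs : star U * U = 1 := Matrix.mem_unitaryGroup_iff'.mp h.eigenvectorUnitary.2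
  have hUs' : U * star U = 1 := Matrix.mem_unitaryGroup_iff.mp h.eigenvectorUnitary.2
  set y : V → ℝ := star U *ᵥ x with hy
  have hsU : star U = Uᵀ := by
    rw [Matrix.star_eq_conjTranspose, Matrix.conjTranspose_eq_transpose_of_trivial]
  have hxy : x = U *ᵥ y := by
    rw [hy, Matrix.mulVec_mulVec, hUs', Matrix.one_mulVec]
  have hnorm : x ⬝ᵥ x = ∑ i, y i ^ 2 := by
    conv_lhs => rw [hxy, Matrix.dotProduct_mulVec, ← Matrix.mulVec_transpose, ← hsU,
      Matrix.mulVec_mulVec, hUs, Matrix.one_mulVec]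
    simp [dotProduct, sq]
  have hquad : x ⬝ᵥ (M *ᵥ x) = ∑ i, h.eigenvalues i * y i ^ 2 := by
    have hM : M = U * diagonal (RCLike.ofReal ∘ h.eigenvalues) * star U := h.spectral_theorem
    conv_lhs => rw [hM, ← Matrix.mulVec_mulVec, ← Matrix.mulVec_mulVec,
      Matrix.dotProduct_mulVec, ← Matrix.mulVec_transpose, ← hsU]
    simp [Matrix.mulVec_diagonal, dotProduct, sq]
    exact Finset.sum_congr rfl fun i _ => by rw [← hy]; ring
  have hy0 : y i₀ = 0 := by
    rw [hy, Matrix.mulVec, hsU]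
    simpa [dotProduct, Matrix.transpose_apply, mul_comm] using hx
  rw [hnorm, hquad, Finset.mul_sum]
  apply Finset.sum_le_sum
  intro i _
  by_cases hi : i = i₀
  · simp [hi, hy0]
  · exact mul_le_mul_of_nonneg_right (hc i hi) (sq_nonneg _)

lemma aux_exists_i0 {M : Matrix V V ℝ} (h : M.IsHermitian) (hcard : 2 ≤ Fintype.card V) :
    ∃ i₀, ∀ i, i ≠ i₀ → lambda2 h ≤ h.eigenvalues i := by
  have hl : (↑(eigList h) : Multiset ℝ) = Finset.univ.val.map h.eigenvalues :=
    Multiset.sort_eq _ (· ≤ ·)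
  have hsort : (eigList h).Pairwise (· ≤ ·) := Multiset.pairwise_sort _ (· ≤ ·)
  have hlen : 2 ≤ (eigList h).length := by
    rw [eigList, Multiset.length_sort, Multiset.card_map]
    simpa using hcard
  obtain ⟨a, b, t, hlt⟩ : ∃ a b t, eigList h = a :: b :: t := by
    match hh : eigList h, hlen with
    | a :: b :: t, _ => exact ⟨a, b, t, rfl⟩
  have ha : a ∈ Finset.univ.val.map h.eigenvalues := by
    rw [← hl, hlt]; simp
  obtain ⟨i₀, -, hi₀⟩ := Multiset.mem_map.mp ha
  refine ⟨i₀, fun i hi => ?_⟩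
  have hlam : lambda2 h = b := by rw [lambda2, hlt]; rfl
  have hmem : h.eigenvalues i ∈ b :: t := by
    have h2 : (↑(b :: t) : Multiset ℝ) = (Finset.univ.val.erase i₀).map h.eigenvalues := by
      have h3 : (a ::ₘ ↑(b :: t) : Multiset ℝ)
          = a ::ₘ (Finset.univ.val.erase i₀).map h.eigenvalues := by
        rw [Multiset.cons_coe, ← hlt, hl]
        conv_rhs => rw [← hi₀]
        rw [← Multiset.map_cons, Multiset.cons_erase (Finset.mem_univ_val i₀)]
      exact (Multiset.cons_inj_right a).mp h3
    have : h.eigenvalues i ∈ (Finset.univ.val.erase i₀).map h.eigenvalues :=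
      Multiset.mem_map_of_mem _ ((Multiset.mem_erase_of_ne hi).mpr (Finset.mem_univ_val i))
    rw [← Multiset.mem_coe, h2]
    exact this
  rw [hlam]
  rw [hlt, List.pairwise_cons, List.pairwise_cons] at hsort
  rcases List.mem_cons.mp hmem with he | hm
  · exact le_of_eq he.symm
  · exact hsort.2.1 _ hm

end Aux

theorem stmt_0 {N : ℕ} (hN : 2 ≤ N) (G : SimpleGraph (Fin N)) [DecidableRel G.Adj]
    (S₁ S₂ : Finset (Fin N)) (h₁ : S₁.Nonempty) (h₂ : S₂.Nonempty) (hdisj : Disjoint S₁ S₂) :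
    lambda2 (SimpleGraph.posSemidef_lapMatrix ℝ G).isHermitian ≤
      (cut G S₁ S₁ᶜ : ℝ) / S₁.card + (cut G S₂ S₂ᶜ : ℝ) / S₂.card := by
  classical
  set hM := (SimpleGraph.posSemidef_lapMatrix ℝ G).isHermitian with hhM
  have hcard : 2 ≤ Fintype.card (Fin N) := by simpa using hN
  obtain ⟨i₀, hi₀⟩ := aux_exists_i0 hM hcard
  set u : Fin N → ℝ := fun v => (hM.eigenvectorUnitary : Matrix (Fin N) (Fin N) ℝ) v i₀ with hu
  obtain ⟨α, β, hab, hnz⟩ : ∃ α β : ℝ,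
      α * (∑ v ∈ S₁, u v) + β * (∑ v ∈ S₂, u v) = 0 ∧ (α ≠ 0 ∨ β ≠ 0) := by
    by_cases hb : (∑ v ∈ S₂, u v) = 0
    · exact ⟨0, 1, by simp [hb], Or.inr one_ne_zero⟩
    · exact ⟨∑ v ∈ S₂, u v, -(∑ v ∈ S₁, u v), by ring, Or.inl hb⟩
  set x : Fin N → ℝ := fun v => (if v ∈ S₁ then α else 0) + (if v ∈ S₂ then β else 0) with hxdef
  set R : Finset (Fin N) := (S₁ ∪ S₂)ᶜ with hR
  have hmem12 : ∀ v ∈ S₁, v ∉ S₂ := fun v hv => Finset.disjoint_left.mp hdisj hv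
  have hx1 : ∀ v ∈ S₁, x v = α := fun v hv => by
    simp [hxdef, hv, hmem12 v hv]
  have hx2 : ∀ v ∈ S₂, x v = β := fun v hv => by
    have : v ∉ S₁ := fun hv1 => hmem12 v hv1 hv
    simp [hxdef, hv, this]
  have hx0 : ∀ v ∈ R, x v = 0 := fun v hv => by
    rw [hR, Finset.mem_compl, Finset.mem_union] at hv
    push_neg at hv
    simp [hxdef, hv.1, hv.2]
  have hdUR : Disjoint (S₁ ∪ S₂) R := disjoint_compl_right
  have hd1R : Disjoint S₁ R := hdUR.mono_left Finset.subset_union_left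
  have hd2R : Disjoint S₂ R := hdUR.mono_left Finset.subset_union_right
  have hudecomp : (Finset.univ : Finset (Fin N)) = (S₁ ∪ S₂) ∪ R := by
    rw [hR, Finset.union_compl]
  -- cardinalities
  have hs₁ : (0:ℝ) < S₁.card := by exact_mod_cast Finset.card_pos.mpr h₁
  have hs₂ : (0:ℝ) < S₂.card := by exact_mod_cast Finset.card_pos.mpr h₂
  -- orthogonality
  have horth : ∑ v, u v * x v = 0 := by
    have t1 : ∑ v ∈ S₁, u v * x v = (∑ v ∈ S₁, u v) * α := by
      rw [Finset.sum_mul]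
      exact Finset.sum_congr rfl fun v hv => by rw [hx1 v hv]
    have t2 : ∑ v ∈ S₂, u v * x v = (∑ v ∈ S₂, u v) * β := by
      rw [Finset.sum_mul]
      exact Finset.sum_congr rfl fun v hv => by rw [hx2 v hv]
    have t3 : ∑ v ∈ R, u v * x v = 0 :=
      Finset.sum_eq_zero fun v hv => by rw [hx0 v hv, mul_zero]
    rw [hudecomp, Finset.sum_union hdUR, Finset.sum_union hdisj, t1, t2, t3]
    linarith [hab]
  -- norm
  have hnorm : x ⬝ᵥ x = α^2 * S₁.card + β^2 * S₂.card := by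
    show ∑ v, x v * x v = _
    have t1 : ∑ v ∈ S₁, x v * x v = (S₁.card : ℝ) * (α * α) := by
      rw [← nsmul_eq_mul, ← Finset.sum_const]
      exact Finset.sum_congr rfl fun v hv => by rw [hx1 v hv]
    have t2 : ∑ v ∈ S₂, x v * x v = (S₂.card : ℝ) * (β * β) := by
      rw [← nsmul_eq_mul, ← Finset.sum_const]
      exact Finset.sum_congr rfl fun v hv => by rw [hx2 v hv]
    have t3 : ∑ v ∈ R, x v * x v = 0 :=
      Finset.sum_eq_zero fun v hv => by rw [hx0 v hv, mul_zero]
    rw [hudecomp, Finset.sum_union hdUR, Finset.sum_union hdisj, t1, t2, t3]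
    ring
  have hnpos : (0:ℝ) < α^2 * S₁.card + β^2 * S₂.card := by
    rcases hnz with hα | hβ
    · have h1 : (0:ℝ) < α^2 * S₁.card := mul_pos (by positivity) hs₁
      nlinarith [sq_nonneg β, mul_nonneg (sq_nonneg β) hs₂.le]
    · have h1 : (0:ℝ) < β^2 * S₂.card := mul_pos (by positivity) hs₂
      nlinarith [mul_nonneg (sq_nonneg α) hs₁.le]
  -- quadratic form value
  have hkey : ∀ (P Q : Finset (Fin N)) (p q : ℝ), (∀ v ∈ P, x v = p) → (∀ v ∈ Q, x v = q) →
      ∑ i ∈ P, ∑ j ∈ Q, (if G.Adj i j then (x i - x j)^2 else 0) = (p - q)^2 * cut G P Q := by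
    intro P Q p q hP hQ
    rw [← aux_sum_cut]
    exact Finset.sum_congr rfl fun i hi => Finset.sum_congr rfl fun j hj => by
      rw [hP i hi, hQ j hj]
  have hQval : x ⬝ᵥ (G.lapMatrix ℝ *ᵥ x) =
      (α - β)^2 * cut G S₁ S₂ + α^2 * cut G S₁ R + β^2 * cut G S₂ R := by
    rw [← Matrix.toLinearMap₂'_apply', SimpleGraph.lapMatrix_toLinearMap₂']
    simp only [hudecomp, Finset.sum_union hdUR, Finset.sum_union hdisj,
      Finset.sum_add_distrib]
    rw [hkey S₁ S₁ α α hx1 hx1, hkey S₁ S₂ α β hx1 hx2, hkey S₁ R α 0 hx1 hx0,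
        hkey S₂ S₁ β α hx2 hx1, hkey S₂ S₂ β β hx2 hx2, hkey S₂ R β 0 hx2 hx0,
        hkey R S₁ 0 α hx0 hx1, hkey R S₂ 0 β hx0 hx2, hkey R R 0 0 hx0 hx0]
    rw [aux_cut_comm G S₂ S₁, aux_cut_comm G R S₁, aux_cut_comm G R S₂]
    ring
  -- cut decompositions
  have hcompl1 : S₁ᶜ = S₂ ∪ R := by
    rw [hR]
    ext v
    have hv12 := hmem12 v
    simp only [Finset.mem_compl, Finset.mem_union]
    tauto
  have hcompl2 : S₂ᶜ = S₁ ∪ R := by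
    rw [hR]
    ext v
    have hv12 := hmem12 v
    simp only [Finset.mem_compl, Finset.mem_union]
    tauto
  have hc1 : (cut G S₁ S₁ᶜ : ℝ) = cut G S₁ S₂ + cut G S₁ R := by
    rw [hcompl1, aux_cut_union G S₁ S₂ R hd2R]
  have hc2 : (cut G S₂ S₂ᶜ : ℝ) = cut G S₁ S₂ + cut G S₂ R := by
    rw [hcompl2, aux_cut_union G S₂ S₁ R hd1R, aux_cut_comm G S₂ S₁]
  -- assemble
  have hQ1 : lambda2 hM * (x ⬝ᵥ x) ≤ x ⬝ᵥ (G.lapMatrix ℝ *ᵥ x) :=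
    aux_quadform_ge hM (lambda2 hM) i₀ hi₀ x horth
  set e12 : ℝ := (cut G S₁ S₂ : ℝ)
  set e1 : ℝ := (cut G S₁ R : ℝ)
  set e2 : ℝ := (cut G S₂ R : ℝ)
  have he12 : (0:ℝ) ≤ e12 := Nat.cast_nonneg _
  have he1 : (0:ℝ) ≤ e1 := Nat.cast_nonneg _
  have he2 : (0:ℝ) ≤ e2 := Nat.cast_nonneg _
  rw [hnorm] at hQ1
  rw [hQval] at hQ1
  have hfinal : (α - β)^2 * e12 + α^2 * e1 + β^2 * e2 ≤
      ((cut G S₁ S₁ᶜ : ℝ) / S₁.card + (cut G S₂ S₂ᶜ : ℝ) / S₂.card)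
        * (α^2 * S₁.card + β^2 * S₂.card) := by
    rw [hc1, hc2, div_add_div _ _ hs₁.ne' hs₂.ne', div_mul_eq_mul_div,
        le_div_iff₀ (mul_pos hs₁ hs₂)]
    nlinarith [mul_nonneg he12 (sq_nonneg (α * (S₁.card:ℝ) + β * (S₂.card:ℝ))),
      mul_nonneg (mul_nonneg he1 (sq_nonneg β)) (sq_nonneg (S₂.card:ℝ)),
      mul_nonneg (mul_nonneg he2 (sq_nonneg α)) (sq_nonneg (S₁.card:ℝ))]
  have := le_trans hQ1 hfinal
  exact le_of_mul_le_mul_right (by linarith) hnpos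
end

section
/- Let G₁ and G₂ be finite simple undirected graphs on disjoint vertex sets, and let G be the bridge gluing of G₁ and G₂ obtained by adding k edges, each joining a vertex of G₁ to a vertex of G₂. Then the algebraic connectivity (second-smallest Laplacian eigenvalue) of G satisfies λ₂(G) ≤ k/|V(G₁)| + k/|V(G₂)|. -/
open Matrix

-- sorted list: second entry ≤ m if at least two entries ≤ m
lemma sorted_get_one_le {L : List ℝ} (hs : L.Pairwise (· ≤ ·)) (h1 : 1 < L.length)
    {m : ℝ} (h2 : 2 ≤ L.countP (fun a => decide (a ≤ m))) : L.get ⟨1, h1⟩ ≤ m := by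
  by_contra hc
  push_neg at hc
  have hmono : ∀ j : Fin L.length, 1 ≤ (j : ℕ) → m < L.get j := by
    intro j hj
    rcases eq_or_lt_of_le hj with h | h
    · have he : j = (⟨1, h1⟩ : Fin L.length) := Fin.ext h.symm
      rw [he]; exact hc
    · exact lt_of_lt_of_le hc (List.pairwise_iff_get.mp hs ⟨1, h1⟩ j h)
  have : L.countP (fun a => decide (a ≤ m)) ≤ 1 := by
    have hL : L = L.take 1 ++ L.drop 1 := (List.take_append_drop 1 L).symm
    rw [hL, List.countP_append]
    have h1' : (L.take 1).countP (fun a => decide (a ≤ m)) ≤ 1 := by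
      calc (L.take 1).countP (fun a => decide (a ≤ m)) ≤ (L.take 1).length :=
            List.countP_le_length
        _ ≤ 1 := by simp
    have h2' : (L.drop 1).countP (fun a => decide (a ≤ m)) = 0 := by
      rw [List.countP_eq_zero]
      intro a ha
      obtain ⟨j, hjl, rfl⟩ := List.mem_iff_getElem.mp ha
      have hlt : 1 + j < L.length := by
        have := hjl; simp only [List.length_drop] at this; omega
      have hg : (L.drop 1)[j] = L[1 + j]'hlt := List.getElem_drop
      have := hmono ⟨1 + j, hlt⟩ (by simp)
      rw [List.get_eq_getElem] at this
      simp only [hg, decide_eq_true_eq]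
      exact not_le.mpr this
    omega
  omega

lemma lambda2_le_of_two {V : Type} [Fintype V] [DecidableEq V] {M : Matrix V V ℝ}
    (h : M.IsHermitian) {m : ℝ} {i j : V} (hij : i ≠ j)
    (hi : h.eigenvalues i ≤ m) (hj : h.eigenvalues j ≤ m) : lambda2 h ≤ m := by
  have hcard : 2 ≤ Fintype.card V := Fintype.one_lt_card_iff_nontrivial.mpr ⟨⟨i, j, hij⟩⟩
  have hlen : 1 < (eigList h).length := by
    rw [eigList, Multiset.length_sort, Multiset.card_map]
    exact (hcard : 1 < Fintype.card V).trans_eq Finset.card_univ.symm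
  have hsort : (eigList h).Pairwise (· ≤ ·) := Multiset.pairwise_sort _ _
  have hcount : 2 ≤ (eigList h).countP (fun a => decide (a ≤ m)) := by
    have : ((eigList h : List ℝ) : Multiset ℝ) = Finset.univ.val.map h.eigenvalues :=
      Multiset.sort_eq _ _
    have hsub : ({i, j} : Finset V).val.map h.eigenvalues ≤
        Finset.univ.val.map h.eigenvalues :=
      Multiset.map_le_map (Finset.val_le_iff.mpr (Finset.subset_univ _))
    have hc2 : Multiset.countP (fun a => decide (a ≤ m))
        (({i, j} : Finset V).val.map h.eigenvalues) = 2 := by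
      rw [Finset.insert_val, Multiset.ndinsert_of_notMem (by simpa using hij)]
      simp only [Finset.singleton_val, Multiset.map_cons, Multiset.map_singleton,
        ← Multiset.cons_zero (h.eigenvalues j), Multiset.countP_cons, Multiset.countP_zero,
        decide_eq_true_eq]
      simp [hi, hj]
    calc (2 : ℕ) = _ := hc2.symm
      _ ≤ Multiset.countP (fun a => decide (a ≤ m))
          (Finset.univ.val.map h.eigenvalues) := Multiset.countP_le_of_le _ hsub
      _ = (eigList h).countP (fun a => decide (a ≤ m)) := by
          rw [← this, Multiset.coe_countP]; simp
  have := sorted_get_one_le hsort hlen hcount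
  rw [List.get_eq_getElem] at this
  rwa [lambda2, List.getD_eq_getElem _ _ hlen]

lemma eig_small_unique {V : Type} [Fintype V] [DecidableEq V] {M : Matrix V V ℝ}
    (h : M.IsHermitian) {i j : V} (hij : i ≠ j)
    (hi : h.eigenvalues i < lambda2 h) (hj : h.eigenvalues j < lambda2 h) : False := by
  have := lambda2_le_of_two h hij (le_max_left (h.eigenvalues i) (h.eigenvalues j))
    (le_max_right _ _)
  exact absurd this (not_le.mpr (max_lt hi hj))

lemma lambda2_mul_le_quadForm {V : Type} [Fintype V] [DecidableEq V] {M : Matrix V V ℝ}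
    (hM : M.PosSemidef) (h : M.IsHermitian) (u x : V → ℝ) (hu : u ≠ 0)
    (hMu : M *ᵥ u = 0) (hux : u ⬝ᵥ x = 0) :
    lambda2 h * (x ⬝ᵥ x) ≤ x ⬝ᵥ (M *ᵥ x) := by
  set U : Matrix V V ℝ := (h.eigenvectorUnitary : Matrix V V ℝ) with hU
  have h1 : star U * U = 1 := Unitary.coe_star_mul_self h.eigenvectorUnitary
  have h2 : U * star U = 1 := Unitary.coe_mul_star_self h.eigenvectorUnitary
  set ev := h.eigenvalues with hev
  set c : V → ℝ := star U *ᵥ x with hc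
  set d : V → ℝ := star U *ᵥ u with hd
  have hdot : ∀ y z : V → ℝ, (star U *ᵥ y) ⬝ᵥ (star U *ᵥ z) = y ⬝ᵥ z := by
    intro y z
    rw [dotProduct_mulVec, star_eq_conjTranspose, conjTranspose_eq_transpose_of_trivial,
      vecMul_transpose, mulVec_mulVec, ← conjTranspose_eq_transpose_of_trivial,
      ← star_eq_conjTranspose, h2, one_mulVec]
  have hxc : x = U *ᵥ c := by
    rw [hc, mulVec_mulVec, h2, one_mulVec]
  have hud : u = U *ᵥ d := by
    rw [hd, mulVec_mulVec, h2, one_mulVec]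
  have hdne : d ≠ 0 := by
    intro h0
    exact hu (by rw [hud, h0, mulVec_zero])
  have hdiag : Matrix.diagonal (RCLike.ofReal ∘ ev) = Matrix.diagonal ev := rfl
  have hDd : ∀ i, ev i * d i = 0 := by
    have : (Matrix.diagonal ev) *ᵥ d = 0 := by
      have h3 : star U * M = Matrix.diagonal ev * star U := by
        conv_lhs => rw [h.spectral_theorem, Unitary.conjStarAlgAut_apply]
        rw [hdiag, ← Matrix.mul_assoc, ← Matrix.mul_assoc, h1, Matrix.one_mul]
      calc (Matrix.diagonal ev) *ᵥ d = (Matrix.diagonal ev * star U) *ᵥ u := by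
            rw [hd, mulVec_mulVec]
        _ = (star U * M) *ᵥ u := by rw [h3]
        _ = star U *ᵥ (M *ᵥ u) := by rw [mulVec_mulVec]
        _ = 0 := by rw [hMu, mulVec_zero]
    intro i
    have := congrFun this i
    rwa [mulVec_diagonal] at this
  have hquad : x ⬝ᵥ (M *ᵥ x) = ∑ i, ev i * (c i)^2 := by
    conv_lhs => rw [h.spectral_theorem, Unitary.conjStarAlgAut_apply, hdiag]
    rw [← mulVec_mulVec, ← mulVec_mulVec, ← hc]
    have : x ⬝ᵥ (U *ᵥ (Matrix.diagonal ev *ᵥ c)) =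
        (star U *ᵥ x) ⬝ᵥ (Matrix.diagonal ev *ᵥ c) := by
      rw [star_eq_conjTranspose, conjTranspose_eq_transpose_of_trivial,
        mulVec_transpose, dotProduct_mulVec]
    rw [this, ← hc, dotProduct]
    congr 1
    funext i
    rw [mulVec_diagonal]
    ring
  have hnorm : x ⬝ᵥ x = ∑ i, (c i)^2 := by
    rw [← hdot x x, ← hc, dotProduct]
    congr 1
    funext i
    ring
  have hdc : ∑ i, d i * c i = 0 := by
    have := hdot u x
    rw [← hd, ← hc] at this
    rw [← hux, ← this, dotProduct]
  rcases le_or_gt (lambda2 h) 0 with hl | hl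
  · have hpsd : 0 ≤ x ⬝ᵥ (M *ᵥ x) := by
      have := hM.dotProduct_mulVec_nonneg x
      simpa using this
    have hxx : 0 ≤ x ⬝ᵥ x := by
      rw [dotProduct]
      exact Finset.sum_nonneg fun i _ => mul_self_nonneg _
    exact le_trans (mul_nonpos_of_nonpos_of_nonneg hl hxx) hpsd
  · rw [hquad, hnorm, Finset.mul_sum]
    by_cases hall : ∀ i, lambda2 h ≤ ev i
    · exact Finset.sum_le_sum fun i _ =>
        mul_le_mul_of_nonneg_right (hall i) (sq_nonneg _)
    · push_neg at hall
      obtain ⟨i₀, hi₀⟩ := hall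
      have huniq : ∀ j, j ≠ i₀ → lambda2 h ≤ ev j := by
        intro j hj
        by_contra hlt
        push_neg at hlt
        exact eig_small_unique h hj hlt hi₀
      have hd0 : ∀ j, j ≠ i₀ → d j = 0 := by
        intro j hj
        have hevj : ev j ≠ 0 := ne_of_gt (lt_of_lt_of_le hl (huniq j hj))
        have := hDd j
        exact (mul_eq_zero.mp this).resolve_left hevj
      have hdi₀ : d i₀ ≠ 0 := by
        intro h0
        apply hdne
        funext j
        by_cases hj : j = i₀
        · rw [hj]; exact h0
        · exact hd0 j hj
      have hc0 : c i₀ = 0 := by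
        have hs : ∑ i, d i * c i = d i₀ * c i₀ := by
          apply Finset.sum_eq_single i₀
          · intro j _ hj
            rw [hd0 j hj, zero_mul]
          · intro hni; exact absurd (Finset.mem_univ i₀) hni
        rw [hdc] at hs
        exact (mul_eq_zero.mp hs.symm).resolve_left hdi₀
      apply Finset.sum_le_sum
      intro i _
      by_cases hii : i = i₀
      · rw [hii, hc0]
        simp
      · exact mul_le_mul_of_nonneg_right (huniq i hii) (sq_nonneg _)
/-- The bridge gluing of two graphs `G₁`, `G₂` on disjoint vertex sets along a bridge `B`,
consisting of edges each joining a vertex of `G₁` to a vertex of `G₂`. -/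
def bridgeGlue {n₁ n₂ : ℕ} (G₁ : SimpleGraph (Fin n₁)) (G₂ : SimpleGraph (Fin n₂))
    (B : Finset (Fin n₁ × Fin n₂)) : SimpleGraph (Fin n₁ ⊕ Fin n₂) where
  Adj u v :=
    match u, v with
    | Sum.inl a, Sum.inl b => G₁.Adj a b
    | Sum.inr a, Sum.inr b => G₂.Adj a b
    | Sum.inl a, Sum.inr b => (a, b) ∈ B
    | Sum.inr a, Sum.inl b => (b, a) ∈ B
  symm := by
    constructor
    rintro (a | a) (b | b) h
    · exact G₁.adj_symm h
    · exact h
    · exact h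
    · exact G₂.adj_symm h
  loopless := by
    constructor
    rintro (a | a) h
    · exact G₁.irrefl h
    · exact G₂.irrefl h

noncomputable instance {n₁ n₂ : ℕ} (G₁ : SimpleGraph (Fin n₁)) (G₂ : SimpleGraph (Fin n₂))
    (B : Finset (Fin n₁ × Fin n₂)) : DecidableRel (bridgeGlue G₁ G₂ B).Adj :=
  Classical.decRel _

theorem stmt_1 {n₁ n₂ k : ℕ} (hn₁ : 0 < n₁) (hn₂ : 0 < n₂)
    (G₁ : SimpleGraph (Fin n₁)) (G₂ : SimpleGraph (Fin n₂))
    (B : Finset (Fin n₁ × Fin n₂)) (hB : B.card = k) :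
    lambda2 (SimpleGraph.posSemidef_lapMatrix ℝ (bridgeGlue G₁ G₂ B)).isHermitian ≤
      (k : ℝ) / n₁ + (k : ℝ) / n₂ := by
  set G := bridgeGlue G₁ G₂ B with hG
  set M := G.lapMatrix ℝ with hM
  have hPSD : M.PosSemidef := SimpleGraph.posSemidef_lapMatrix ℝ G
  set u : Fin n₁ ⊕ Fin n₂ → ℝ := fun _ => 1 with hu'
  set x : Fin n₁ ⊕ Fin n₂ → ℝ := Sum.elim (fun _ => (n₂ : ℝ)) (fun _ => -(n₁ : ℝ)) with hx'
  have hn1 : (0:ℝ) < n₁ := by exact_mod_cast hn₁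
  have hn2 : (0:ℝ) < n₂ := by exact_mod_cast hn₂
  have hu : u ≠ 0 := by
    intro h0
    have := congrFun h0 (Sum.inl ⟨0, hn₁⟩)
    simp [hu'] at this
  have hMu : M *ᵥ u = 0 := SimpleGraph.lapMatrix_mulVec_const_eq_zero G
  have hux : u ⬝ᵥ x = 0 := by
    simp only [dotProduct, hu', hx', one_mul, Fintype.sum_sum_type, Sum.elim_inl, Sum.elim_inr,
      Finset.sum_const, Finset.card_univ, Fintype.card_fin, nsmul_eq_mul]
    ring
  have hxx : x ⬝ᵥ x = (n₁ : ℝ) * n₂ * (n₁ + n₂) := by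
    simp only [dotProduct, hx', Fintype.sum_sum_type, Sum.elim_inl, Sum.elim_inr,
      Finset.sum_const, Finset.card_univ, Fintype.card_fin, nsmul_eq_mul]
    ring
  have hquad : x ⬝ᵥ (M *ᵥ x) = (k : ℝ) * (n₁ + n₂)^2 := by
    rw [← Matrix.toLinearMap₂'_apply', hM, SimpleGraph.lapMatrix_toLinearMap₂']
    have h12 : ∀ (a : Fin n₁) (b : Fin n₂),
        (if G.Adj (Sum.inl a) (Sum.inr b) then (x (Sum.inl a) - x (Sum.inr b))^2 else 0)
          = (if (a, b) ∈ B then ((n₁ : ℝ) + n₂)^2 else 0) := by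
      intro a b
      refine if_congr Iff.rfl ?_ rfl
      simp [hx']; ring
    have h21 : ∀ (b : Fin n₂) (a : Fin n₁),
        (if G.Adj (Sum.inr b) (Sum.inl a) then (x (Sum.inr b) - x (Sum.inl a))^2 else 0)
          = (if (a, b) ∈ B then ((n₁ : ℝ) + n₂)^2 else 0) := by
      intro b a
      refine if_congr Iff.rfl ?_ rfl
      simp [hx']; ring
    have hBsum : ∑ a : Fin n₁, ∑ b : Fin n₂, (if (a, b) ∈ B then ((n₁ : ℝ) + n₂)^2 else 0)
        = (k : ℝ) * (n₁ + n₂)^2 := by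
      rw [← Finset.sum_product']
      rw [show (∑ p ∈ Finset.univ ×ˢ Finset.univ,
        if (p.1, p.2) ∈ B then ((n₁ : ℝ) + n₂)^2 else 0) = ∑ p ∈ Finset.univ ×ˢ Finset.univ,
        if p ∈ B then ((n₁ : ℝ) + n₂)^2 else 0 from rfl]
      rw [Finset.sum_ite_mem, Finset.univ_product_univ, Finset.univ_inter, Finset.sum_const, hB, nsmul_eq_mul]
    rw [Fintype.sum_sum_type]
    simp only [Fintype.sum_sum_type]
    have e11 : ∀ a b : Fin n₁,
        (if G.Adj (Sum.inl a) (Sum.inl b) then (x (Sum.inl a) - x (Sum.inl b))^2 else 0) = 0 := by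
      intro a b; simp [hx']
    have e22 : ∀ a b : Fin n₂,
        (if G.Adj (Sum.inr a) (Sum.inr b) then (x (Sum.inr a) - x (Sum.inr b))^2 else 0) = 0 := by
      intro a b; simp [hx']
    simp only [e11, e22, h12, h21, Finset.sum_const_zero, zero_add, add_zero]
    have hcomm : (∑ b : Fin n₂, ∑ a : Fin n₁, if (a, b) ∈ B then ((n₁ : ℝ) + n₂)^2 else 0)
        = ∑ a : Fin n₁, ∑ b : Fin n₂, if (a, b) ∈ B then ((n₁ : ℝ) + n₂)^2 else 0 :=
      Finset.sum_comm
    rw [hcomm, hBsum]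
    ring
  have key := lambda2_mul_le_quadForm hPSD hPSD.isHermitian u x hu hMu hux
  rw [hxx, hquad] at key
  rw [div_add_div _ _ (ne_of_gt hn1) (ne_of_gt hn2), le_div_iff₀ (by positivity)]
  nlinarith [key, mul_pos hn1 hn2, sq_nonneg ((n₁:ℝ) + n₂)]
end

section
/- Let G be a finite simple undirected connected graph and let Y be a nonempty proper subset of the vertices of G whose removal disconnects the remaining vertices into the vertex sets of two induced subgraphs G₁ and G₂ (no edges between V(G₁)∖Y and V(G₂)∖Y). Writing the Laplacian L(G) in block form with respect to the partition (V∖Y, Y), let A₁ and A₂ be the principal submatrices of L(G) indexed by V(G₁)∖Y and V(G₂)∖Y respectively. Then λ₂(G) ≤ max{λ_min(A₁), λ_min(A₂)}, where λ_min denotes the smallest eigenvalue. -/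
open Matrix

/-- The smallest eigenvalue of a Hermitian matrix. -/
noncomputable def lambdaMin {V : Type} [Fintype V] [DecidableEq V]
    {M : Matrix V V ℝ} (h : M.IsHermitian) : ℝ :=
  (eigList h).getD 0 0

section helpers
variable {V : Type} [Fintype V] [DecidableEq V] {M : Matrix V V ℝ} (h : M.IsHermitian)

lemma eigList_length : (eigList h).length = Fintype.card V := by
  simp [eigList, Multiset.length_sort]

lemma eigList_coe : (eigList h : Multiset ℝ) = Finset.univ.val.map h.eigenvalues :=
  Multiset.sort_eq _ _

lemma exists_cons_of_card_pos [Nonempty V] : ∃ a t, eigList h = a :: t := by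
  cases hl : eigList h with
  | nil =>
    have := eigList_length h
    rw [hl] at this
    simp only [List.length_nil] at this
    have := Fintype.card_pos (α := V)
    omega
  | cons a t => exact ⟨a, t, rfl⟩

lemma lambdaMin_le [Nonempty V] (i : V) : lambdaMin h ≤ h.eigenvalues i := by
  obtain ⟨a, t, hl⟩ := exists_cons_of_card_pos h
  have hmem : h.eigenvalues i ∈ eigList h := by
    rw [eigList, Multiset.mem_sort]
    exact Multiset.mem_map_of_mem _ (Finset.mem_univ i)
  have hs : (eigList h).Pairwise (· ≤ ·) := Multiset.pairwise_sort _ _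
  rw [hl] at hmem hs
  rw [List.pairwise_cons] at hs
  unfold lambdaMin
  rw [hl]
  simp only [List.getD_cons_zero]
  rcases List.mem_cons.mp hmem with h1 | h1
  · exact h1.ge
  · exact hs.1 _ h1

lemma exists_eig_lambdaMin [Nonempty V] : ∃ i, h.eigenvalues i = lambdaMin h := by
  obtain ⟨a, t, hl⟩ := exists_cons_of_card_pos h
  have : a ∈ eigList h := by rw [hl]; exact List.mem_cons_self
  rw [eigList, Multiset.mem_sort, Multiset.mem_map] at this
  obtain ⟨i, _, hi⟩ := this
  exact ⟨i, by rw [hi, lambdaMin, hl]; simp⟩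

lemma lambda2_le {i₀ : V} (hcard : 2 ≤ Fintype.card V)
    (hmin : h.eigenvalues i₀ = lambdaMin h) :
    ∀ i, i ≠ i₀ → lambda2 h ≤ h.eigenvalues i := by
  intro i hi
  obtain ⟨a, b, t, hl⟩ : ∃ a b t, eigList h = a :: b :: t := by
    have hlen := eigList_length h
    cases hl : eigList h with
    | nil => rw [hl] at hlen; simp at hlen; omega
    | cons a s =>
      cases hs : s with
      | nil => rw [hl, hs] at hlen; simp at hlen; omega
      | cons b t => exact ⟨a, b, t, rfl⟩

  have ha : h.eigenvalues i₀ = a := by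
    rw [hmin, lambdaMin, hl]; simp
  have hcoe : (Finset.univ.val.map h.eigenvalues) = a ::ₘ (b :: t : List ℝ) := by
    rw [← eigList_coe h, hl]; rfl
  have huniv : (Finset.univ.val : Multiset V) = i₀ ::ₘ Finset.univ.val.erase i₀ :=
    (Multiset.cons_erase (Finset.mem_univ i₀)).symm
  have hrest : (Finset.univ.val.erase i₀).map h.eigenvalues = ((b :: t : List ℝ) : Multiset ℝ) := by
    have : ((Finset.univ.val.erase i₀).map h.eigenvalues).cons a
        = ((b :: t : List ℝ) : Multiset ℝ).cons a := by
      rw [← ha, ← Multiset.map_cons, ← huniv, hcoe, ha]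
    exact (Multiset.cons_inj_right a).mp this
  have hmem : h.eigenvalues i ∈ ((b :: t : List ℝ) : Multiset ℝ) := by
    rw [← hrest]
    exact Multiset.mem_map_of_mem _ (Multiset.mem_erase_of_ne hi |>.mpr (Finset.mem_univ i))
  have hs : (eigList h).Pairwise (· ≤ ·) := Multiset.pairwise_sort _ _
  rw [hl, List.pairwise_cons] at hs
  have hs2 := hs.2
  rw [List.pairwise_cons] at hs2
  rw [Multiset.mem_coe] at hmem
  have : lambda2 h = b := by rw [lambda2, hl]; simp
  rw [this]
  rcases List.mem_cons.mp hmem with h1 | h1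
  · exact h1.ge
  · exact hs2.1 _ h1

end helpers

section spectral
variable {V : Type} [Fintype V] [DecidableEq V] {M : Matrix V V ℝ} (h : M.IsHermitian)

noncomputable def coords (x : V → ℝ) : V → ℝ :=
  star (h.eigenvectorUnitary : Matrix V V ℝ) *ᵥ x

lemma coords_apply (x : V → ℝ) (i : V) :
    coords h x i = ∑ j, h.eigenvectorBasis i j * x j := by
  simp [coords, mulVec, dotProduct, conjTranspose_apply]

lemma dot_self_eq (x : V → ℝ) : x ⬝ᵥ x = ∑ i, (coords h x i)^2 := by
  have hU : (h.eigenvectorUnitary : Matrix V V ℝ) * star (h.eigenvectorUnitary : Matrix V V ℝ) = 1 :=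
    Matrix.mem_unitaryGroup_iff.mp h.eigenvectorUnitary.2
  have : ∑ i, (coords h x i)^2 = coords h x ⬝ᵥ coords h x := by
    simp [dotProduct, pow_two]
  rw [this, coords]
  rw [dotProduct_mulVec, ← transpose_transpose (star (h.eigenvectorUnitary : Matrix V V ℝ)),
    vecMul_transpose]
  rw [show ((star (h.eigenvectorUnitary : Matrix V V ℝ))ᵀ) = (h.eigenvectorUnitary : Matrix V V ℝ) by
    rw [star_eq_conjTranspose, conjTranspose_eq_transpose_of_trivial, transpose_transpose]]
  have hU' : (h.eigenvectorUnitary : Matrix V V ℝ) * ((h.eigenvectorUnitary : Matrix V V ℝ))ᵀ = 1 := by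
    rw [show ((h.eigenvectorUnitary : Matrix V V ℝ))ᵀ = star (h.eigenvectorUnitary : Matrix V V ℝ) by
      rw [star_eq_conjTranspose, conjTranspose_eq_transpose_of_trivial]]
    exact hU
  rw [mulVec_mulVec, hU', one_mulVec]

lemma dot_mulVec_eq (x : V → ℝ) :
    x ⬝ᵥ (M *ᵥ x) = ∑ i, h.eigenvalues i * (coords h x i)^2 := by
  conv_lhs => rw [h.spectral_theorem, Unitary.conjStarAlgAut_apply]
  rw [← mulVec_mulVec, ← mulVec_mulVec, dotProduct_mulVec (A := (h.eigenvectorUnitary : Matrix V V ℝ))]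
  rw [show x ᵥ* (h.eigenvectorUnitary : Matrix V V ℝ)
      = star (h.eigenvectorUnitary : Matrix V V ℝ) *ᵥ x by
    rw [star_eq_conjTranspose, conjTranspose_eq_transpose_of_trivial, mulVec_transpose]]
  rw [← coords]
  simp [dotProduct, mulVec_diagonal]
  congr 1
  ext i
  ring

end spectral

def zeroExt {N : ℕ} (S : Finset (Fin N)) (z : {x // x ∈ S} → ℝ) : Fin N → ℝ :=
  fun v => if hv : v ∈ S then z ⟨v, hv⟩ else 0

lemma zeroExt_dot {N : ℕ} (S : Finset (Fin N)) (z : {x // x ∈ S} → ℝ) (w : Fin N → ℝ) :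
    zeroExt S z ⬝ᵥ w = ∑ i : {x // x ∈ S}, z i * w i.1 := by
  rw [dotProduct, ← Finset.sum_subset S.subset_univ
    (by intro v _ hv; simp [zeroExt, hv]),
    ← Finset.sum_attach S (fun v => zeroExt S z v * w v), Finset.univ_eq_attach]
  apply Finset.sum_congr rfl
  intro x _
  simp [zeroExt, x.2]

lemma dot_zeroExt {N : ℕ} (S : Finset (Fin N)) (z : {x // x ∈ S} → ℝ) (w : Fin N → ℝ) :
    w ⬝ᵥ zeroExt S z = ∑ i : {x // x ∈ S}, w i.1 * z i := by
  rw [dotProduct_comm, zeroExt_dot]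
  simp [mul_comm]

lemma zeroExt_sum {N : ℕ} (S : Finset (Fin N)) (z : {x // x ∈ S} → ℝ) :
    ∑ v, zeroExt S z v = ∑ i : {x // x ∈ S}, z i := by
  have := zeroExt_dot S z (fun _ => 1)
  simpa [dotProduct] using this

lemma zeroExt_dot_self {N : ℕ} (S : Finset (Fin N)) (z : {x // x ∈ S} → ℝ) :
    zeroExt S z ⬝ᵥ zeroExt S z = z ⬝ᵥ z := by
  rw [zeroExt_dot, dotProduct]
  apply Finset.sum_congr rfl
  intro i _
  simp [zeroExt, i.2]

lemma zeroExt_dot_mulVec {N : ℕ} (M : Matrix (Fin N) (Fin N) ℝ) (S : Finset (Fin N))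
    (z : {x // x ∈ S} → ℝ) :
    zeroExt S z ⬝ᵥ (M *ᵥ zeroExt S z)
      = z ⬝ᵥ (M.submatrix (fun i : {x // x ∈ S} => i.1) (fun i : {x // x ∈ S} => i.1) *ᵥ z) := by
  rw [zeroExt_dot, dotProduct]
  apply Finset.sum_congr rfl
  intro i _
  congr 1
  rw [mulVec, dot_zeroExt, mulVec, dotProduct]
  apply Finset.sum_congr rfl
  intro j _
  simp [submatrix_apply]

lemma zeroExt_dot_disjoint {N : ℕ} {S₁ S₂ : Finset (Fin N)} (hd : Disjoint S₁ S₂)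
    (z₁ : {x // x ∈ S₁} → ℝ) (z₂ : {x // x ∈ S₂} → ℝ) :
    zeroExt S₁ z₁ ⬝ᵥ zeroExt S₂ z₂ = 0 := by
  rw [zeroExt_dot]
  apply Finset.sum_eq_zero
  intro i _
  have : (i : Fin N) ∉ S₂ := fun hm => (Finset.disjoint_left.mp hd) i.2 hm
  simp [zeroExt, this]

lemma zeroExt_dot_mulVec_zero {N : ℕ} {M : Matrix (Fin N) (Fin N) ℝ} {S₁ S₂ : Finset (Fin N)}
    (hM : ∀ u ∈ S₁, ∀ v ∈ S₂, M u v = 0)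
    (z₁ : {x // x ∈ S₁} → ℝ) (z₂ : {x // x ∈ S₂} → ℝ) :
    zeroExt S₁ z₁ ⬝ᵥ (M *ᵥ zeroExt S₂ z₂) = 0 := by
  rw [zeroExt_dot]
  apply Finset.sum_eq_zero
  intro i _
  rw [mulVec, dot_zeroExt]
  have : ∑ j : {x // x ∈ S₂}, M i.1 j.1 * z₂ j = 0 :=
    Finset.sum_eq_zero fun j _ => by rw [hM i.1 i.2 j.1 j.2, zero_mul]
  rw [this, mul_zero]

lemma dotProduct_self_pos {N : ℕ} {x : Fin N → ℝ} (hx : x ≠ 0) : 0 < x ⬝ᵥ x := by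
  rcases lt_or_eq_of_le (Finset.sum_nonneg fun i _ => mul_self_nonneg (x i) :
      (0:ℝ) ≤ x ⬝ᵥ x) with h | h
  · exact h
  · exact absurd (dotProduct_self_eq_zero.mp h.symm) hx

theorem stmt_2 {N : ℕ} (G : SimpleGraph (Fin N)) [DecidableRel G.Adj] (hG : G.Connected)
    (Y V₁ V₂ : Finset (Fin N)) (hY : Y.Nonempty) (hYproper : Y ≠ Finset.univ)
    (hV₁ : V₁.Nonempty) (hV₂ : V₂.Nonempty) (hdisj : Disjoint V₁ V₂)
    (hpart : V₁ ∪ V₂ = Yᶜ)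
    (hsep : ∀ u ∈ V₁, ∀ v ∈ V₂, ¬ G.Adj u v) :
    lambda2 (SimpleGraph.posSemidef_lapMatrix ℝ G).isHermitian ≤
      max
        (lambdaMin ((SimpleGraph.posSemidef_lapMatrix ℝ G).isHermitian.submatrix
          (fun i : {x // x ∈ V₁} => i.1)))
        (lambdaMin ((SimpleGraph.posSemidef_lapMatrix ℝ G).isHermitian.submatrix
          (fun i : {x // x ∈ V₂} => i.1))) := by
  classical
  set L := G.lapMatrix ℝ with hLdef
  have hL : L.IsHermitian := (SimpleGraph.posSemidef_lapMatrix ℝ G).isHermitian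
  -- basic nonemptiness
  obtain ⟨y₀, hy₀⟩ := hY
  obtain ⟨w₁, hw₁⟩ := hV₁
  obtain ⟨w₂, hw₂⟩ := hV₂
  have : Nonempty (Fin N) := ⟨y₀⟩
  have hne₁ : Nonempty {x // x ∈ V₁} := ⟨⟨w₁, hw₁⟩⟩
  have hne₂ : Nonempty {x // x ∈ V₂} := ⟨⟨w₂, hw₂⟩⟩
  have hw₁y : w₁ ≠ y₀ := by
    intro hEq
    have : w₁ ∈ Yᶜ := hpart ▸ Finset.mem_union_left _ hw₁
    exact (Finset.mem_compl.mp this) (hEq ▸ hy₀)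
  have hcard : 2 ≤ Fintype.card (Fin N) := by
    have : Nontrivial (Fin N) := ⟨w₁, y₀, hw₁y⟩
    exact Fintype.one_lt_card
  -- the two submatrix hermitian structures
  set h₁ := (SimpleGraph.posSemidef_lapMatrix ℝ G).isHermitian.submatrix
      (fun i : {x // x ∈ V₁} => i.1) with h₁def
  set h₂ := (SimpleGraph.posSemidef_lapMatrix ℝ G).isHermitian.submatrix
      (fun i : {x // x ∈ V₂} => i.1) with h₂def
  set μ₁ := lambdaMin h₁ with hμ₁
  set μ₂ := lambdaMin h₂ with hμ₂
  obtain ⟨i₁, hi₁⟩ := exists_eig_lambdaMin h₁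
  obtain ⟨i₂, hi₂⟩ := exists_eig_lambdaMin h₂
  set v₁ : {x // x ∈ V₁} → ℝ := ⇑(h₁.eigenvectorBasis i₁) with hv₁def
  set v₂ : {x // x ∈ V₂} → ℝ := ⇑(h₂.eigenvectorBasis i₂) with hv₂def
  have hv₁ne : v₁ ≠ 0 := by
    intro hEq
    exact h₁.eigenvectorBasis.orthonormal.ne_zero i₁ (by ext u; exact congrFun hEq u)
  have hv₂ne : v₂ ≠ 0 := by
    intro hEq
    exact h₂.eigenvectorBasis.orthonormal.ne_zero i₂ (by ext u; exact congrFun hEq u)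
  set n₁ := v₁ ⬝ᵥ v₁ with hn₁
  set n₂ := v₂ ⬝ᵥ v₂ with hn₂
  have hn₁pos : 0 < n₁ := by
    rcases lt_or_eq_of_le (Finset.sum_nonneg fun i _ => mul_self_nonneg (v₁ i) :
        (0:ℝ) ≤ v₁ ⬝ᵥ v₁) with h | h
    · exact h
    · exact absurd (dotProduct_self_eq_zero.mp h.symm) hv₁ne
  have hn₂pos : 0 < n₂ := by
    rcases lt_or_eq_of_le (Finset.sum_nonneg fun i _ => mul_self_nonneg (v₂ i) :
        (0:ℝ) ≤ v₂ ⬝ᵥ v₂) with h | h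
    · exact h
    · exact absurd (dotProduct_self_eq_zero.mp h.symm) hv₂ne
  have hq₁ : v₁ ⬝ᵥ (L.submatrix (fun i : {x // x ∈ V₁} => i.1) (fun i : {x // x ∈ V₁} => i.1) *ᵥ v₁)
      = μ₁ * n₁ := by
    rw [show L.submatrix (fun i : {x // x ∈ V₁} => i.1) (fun i : {x // x ∈ V₁} => i.1) *ᵥ v₁
        = h₁.eigenvalues i₁ • v₁ from h₁.mulVec_eigenvectorBasis i₁, hi₁,
      dotProduct_smul, smul_eq_mul]
  have hq₂ : v₂ ⬝ᵥ (L.submatrix (fun i : {x // x ∈ V₂} => i.1) (fun i : {x // x ∈ V₂} => i.1) *ᵥ v₂)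
      = μ₂ * n₂ := by
    rw [show L.submatrix (fun i : {x // x ∈ V₂} => i.1) (fun i : {x // x ∈ V₂} => i.1) *ᵥ v₂
        = h₂.eigenvalues i₂ • v₂ from h₂.mulVec_eigenvectorBasis i₂, hi₂,
      dotProduct_smul, smul_eq_mul]
  -- zero extensions
  set x₁ := zeroExt V₁ v₁ with hx₁def
  set x₂ := zeroExt V₂ v₂ with hx₂def
  set S₁ := ∑ i, v₁ i with hS₁
  set S₂ := ∑ i, v₂ i with hS₂
  obtain ⟨a, b, hab0, habS⟩ : ∃ a b : ℝ, ¬(a = 0 ∧ b = 0) ∧ a * S₁ + b * S₂ = 0 := by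
    by_cases hS : S₁ = 0
    · exact ⟨1, 0, by norm_num, by simp [hS]⟩
    · exact ⟨S₂, -S₁, fun hc => hS (by linarith [hc.2]), by ring⟩
  set x : Fin N → ℝ := a • x₁ + b • x₂ with hxdef
  -- Laplacian entries between V₁ and V₂ vanish
  have hLentry : ∀ u ∈ V₁, ∀ v ∈ V₂, L u v = 0 := by
    intro u hu v hv
    have huv : u ≠ v := fun hEq => (Finset.disjoint_left.mp hdisj) hu (hEq ▸ hv)
    simp [hLdef, SimpleGraph.lapMatrix, SimpleGraph.degMatrix, Matrix.sub_apply,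
      Matrix.diagonal_apply_ne _ huv, hsep u hu v hv]
  have hLentry' : ∀ u ∈ V₂, ∀ v ∈ V₁, L u v = 0 := by
    intro u hu v hv
    have huv : u ≠ v := fun hEq => (Finset.disjoint_left.mp hdisj) hv (hEq ▸ hu)
    have hAdj : ¬ G.Adj u v := fun h => hsep v hv u hu (G.adj_symm h)
    simp [hLdef, SimpleGraph.lapMatrix, SimpleGraph.degMatrix, Matrix.sub_apply,
      Matrix.diagonal_apply_ne _ huv, hAdj]
  -- quadratic form values
  have hxx : x ⬝ᵥ x = a^2 * n₁ + b^2 * n₂ := by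
    rw [hxdef, hx₁def, hx₂def]
    simp only [add_dotProduct, dotProduct_add, smul_dotProduct, dotProduct_smul,
      zeroExt_dot_self, zeroExt_dot_disjoint hdisj, zeroExt_dot_disjoint hdisj.symm,
      smul_eq_mul, mul_zero, add_zero, zero_add]
    rw [hn₁, hn₂]
    ring
  have hLxx : x ⬝ᵥ (L *ᵥ x) = a^2 * (μ₁ * n₁) + b^2 * (μ₂ * n₂) := by
    rw [hxdef, hx₁def, hx₂def]
    simp only [mulVec_add, mulVec_smul, add_dotProduct, dotProduct_add, smul_dotProduct,
      dotProduct_smul, zeroExt_dot_mulVec, zeroExt_dot_mulVec_zero hLentry,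
      zeroExt_dot_mulVec_zero hLentry', smul_eq_mul, mul_zero, add_zero, zero_add]
    rw [hq₁, hq₂]
    ring
  have hxsum : ∑ j, x j = 0 := by
    have : ∑ j, x j = a * S₁ + b * S₂ := by
      rw [hxdef]
      simp only [Pi.add_apply, Pi.smul_apply, smul_eq_mul]
      rw [Finset.sum_add_distrib, ← Finset.mul_sum, ← Finset.mul_sum,
        hx₁def, hx₂def, zeroExt_sum, zeroExt_sum]
    rw [this, habS]
  have hxne : x ≠ 0 := by
    rw [not_and_or] at hab0
    intro hEq
    rcases hab0 with ha | hb
    · obtain ⟨u, hu⟩ := Function.ne_iff.mp hv₁ne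
      have hx2u : x₂ u.1 = 0 := by
        have : (u : Fin N) ∉ V₂ := fun hm => (Finset.disjoint_left.mp hdisj) u.2 hm
        simp [hx₂def, zeroExt, this]
      have hx1u : x₁ u.1 = v₁ u := by simp [hx₁def, zeroExt, u.2]
      have := congrFun hEq u.1
      simp only [hxdef, Pi.add_apply, Pi.smul_apply, smul_eq_mul, Pi.zero_apply,
        hx1u, hx2u, mul_zero, add_zero] at this
      exact (mul_ne_zero ha (by simpa using hu)) this
    · obtain ⟨u, hu⟩ := Function.ne_iff.mp hv₂ne
      have hx1u : x₁ u.1 = 0 := by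
        have : (u : Fin N) ∉ V₁ := fun hm => (Finset.disjoint_left.mp hdisj) hm u.2
        simp [hx₁def, zeroExt, this]
      have hx2u : x₂ u.1 = v₂ u := by simp [hx₂def, zeroExt, u.2]
      have := congrFun hEq u.1
      simp only [hxdef, Pi.add_apply, Pi.smul_apply, smul_eq_mul, Pi.zero_apply,
        hx1u, hx2u, mul_zero, zero_add] at this
      exact (mul_ne_zero hb (by simpa using hu)) this
  have hXpos : 0 < x ⬝ᵥ x := dotProduct_self_pos hxne
  -- the minimal eigenvalue of L is 0 with constant eigenvector
  obtain ⟨i₀, hi₀⟩ := exists_eig_lambdaMin hL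
  have hdet : L.det = 0 := by
    rw [← Matrix.exists_mulVec_eq_zero_iff]
    refine ⟨fun _ => 1, ?_, G.lapMatrix_mulVec_const_eq_zero⟩
    intro hEq
    exact one_ne_zero (congrFun hEq y₀)
  have hmin0 : hL.eigenvalues i₀ = 0 := by
    have hprod : ∏ i, hL.eigenvalues i = 0 := by
      have := hL.det_eq_prod_eigenvalues
      rw [hdet] at this
      exact_mod_cast this.symm
    obtain ⟨j, _, hj⟩ := Finset.prod_eq_zero_iff.mp hprod
    have h1 : lambdaMin hL ≤ 0 := hj ▸ lambdaMin_le hL j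
    have h2 : 0 ≤ hL.eigenvalues i₀ := (SimpleGraph.posSemidef_lapMatrix ℝ G).eigenvalues_nonneg i₀
    rw [hi₀] at h2 ⊢
    linarith
  have hconst : ∀ u w : Fin N, hL.eigenvectorBasis i₀ u = hL.eigenvectorBasis i₀ w := by
    have hker : L *ᵥ ⇑(hL.eigenvectorBasis i₀) = 0 := by
      rw [hL.mulVec_eigenvectorBasis i₀, hmin0, zero_smul]
    have := (G.lapMatrix_mulVec_eq_zero_iff_forall_reachable
        (x := ⇑(hL.eigenvectorBasis i₀))).mp (by exact hker)
    exact fun u w => this u w (hG.preconnected u w)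
  have hcoord0 : coords hL x i₀ = 0 := by
    rw [coords_apply]
    have : ∀ j, hL.eigenvectorBasis i₀ j = hL.eigenvectorBasis i₀ y₀ := fun j => hconst j y₀
    calc ∑ j, hL.eigenvectorBasis i₀ j * x j
        = ∑ j, hL.eigenvectorBasis i₀ y₀ * x j := by
          apply Finset.sum_congr rfl; intro j _; rw [this j]
      _ = hL.eigenvectorBasis i₀ y₀ * ∑ j, x j := by rw [Finset.mul_sum]
      _ = 0 := by rw [hxsum, mul_zero]
  -- the main spectral bound
  have hbound : lambda2 hL * (x ⬝ᵥ x) ≤ x ⬝ᵥ (L *ᵥ x) := by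
    rw [dot_mulVec_eq hL, dot_self_eq hL, Finset.mul_sum]
    apply Finset.sum_le_sum
    intro i _
    by_cases hii : i = i₀
    · rw [hii, hcoord0]
      simp
    · exact mul_le_mul_of_nonneg_right (lambda2_le hL hcard hi₀ i hii) (sq_nonneg _)
  -- conclude
  have hμ₁max : μ₁ ≤ max μ₁ μ₂ := le_max_left _ _
  have hμ₂max : μ₂ ≤ max μ₁ μ₂ := le_max_right _ _
  have hfinal : lambda2 hL * (x ⬝ᵥ x) ≤ max μ₁ μ₂ * (x ⬝ᵥ x) := by
    rw [hLxx] at hbound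
    rw [hxx] at hbound ⊢
    nlinarith [sq_nonneg a, sq_nonneg b, hn₁pos.le, hn₂pos.le,
      mul_le_mul_of_nonneg_right hμ₁max hn₁pos.le,
      mul_le_mul_of_nonneg_right hμ₂max hn₂pos.le]
  exact le_of_mul_le_mul_right hfinal hXpos
end

section
/- Let G be a finite simple undirected connected graph, and let Y be a nonempty proper subset of V(G) such that the induced subgraph on V(G)∖Y is nonempty. Then the principal submatrix A of the Laplacian L(G) indexed by the vertices in V(G)∖Y is symmetric positive definite, provided every connected component of the induced subgraph on V(G)∖Y contains a vertex adjacent to some vertex of Y. -/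
open Matrix

theorem stmt_3 {N : ℕ} (G : SimpleGraph (Fin N)) [DecidableRel G.Adj] (hG : G.Connected)
    (Y : Finset (Fin N)) (hY : Y.Nonempty) (hYproper : Y ≠ Finset.univ)
    (hS : (Yᶜ : Finset (Fin N)).Nonempty)
    (hcomp : ∀ c : (G.induce ((Yᶜ : Finset (Fin N)) : Set (Fin N))).ConnectedComponent,
      ∃ v : ((Yᶜ : Finset (Fin N)) : Set (Fin N)),
        (G.induce ((Yᶜ : Finset (Fin N)) : Set (Fin N))).connectedComponentMk v = c ∧
        ∃ y ∈ Y, G.Adj (v : Fin N) y) :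
    ((G.lapMatrix ℝ).submatrix
        (fun i : {x // x ∈ (Yᶜ : Finset (Fin N))} => i.1)
        (fun i : {x // x ∈ (Yᶜ : Finset (Fin N))} => i.1)).PosDef := by
  classical
  set S := (Yᶜ : Finset (Fin N)) with hSdef
  refine Matrix.PosDef.of_dotProduct_mulVec_pos ?_ ?_
  · exact (G.posSemidef_lapMatrix ℝ).1.submatrix _
  · intro x hx
    set x' : Fin N → ℝ := fun i => if h : i ∈ S then x ⟨i, h⟩ else 0 with hx'
    have hzero : ∀ i ∉ S, x' i = 0 := fun i hi => dif_neg hi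
    have key : star x ⬝ᵥ ((G.lapMatrix ℝ).submatrix
        (fun i : {a // a ∈ S} => i.1) (fun i : {a // a ∈ S} => i.1) *ᵥ x)
        = x' ⬝ᵥ (G.lapMatrix ℝ *ᵥ x') := by
      simp only [star_trivial, dotProduct, mulVec, submatrix_apply]
      rw [← Finset.sum_subset S.subset_univ (fun i _ hi => by
        rw [hzero i hi, zero_mul])]
      rw [← Finset.sum_coe_sort S]
      refine Finset.sum_congr rfl fun i _ => ?_
      have : x' (i : Fin N) = x i := dif_pos i.2
      rw [this]
      congr 1
      rw [← Finset.sum_subset S.subset_univ (fun j _ hj => by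
        rw [hzero j hj, mul_zero])]
      rw [← Finset.sum_coe_sort S]
      refine Finset.sum_congr rfl fun j _ => ?_
      rw [show x' (j : Fin N) = x j from dif_pos j.2]
    rw [key]
    have hsemi := (G.posSemidef_lapMatrix ℝ).dotProduct_mulVec_nonneg x'
    rw [star_trivial] at hsemi
    rcases lt_or_eq_of_le hsemi with h | h
    · exact h
    · exfalso
      have hzeroq : Matrix.toLinearMap₂' ℝ (G.lapMatrix ℝ) x' x' = 0 := by
        rw [toLinearMap₂'_apply', ← h]
      rw [G.lapMatrix_toLinearMap₂'_apply'_eq_zero_iff_forall_reachable] at hzeroq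
      obtain ⟨y, hy⟩ := hY
      have hyzero : x' y = 0 := hzero y (by simp [hSdef, hy])
      apply hx
      funext i
      have : x' (i : Fin N) = 0 := by
        rw [hzeroq (i : Fin N) y (hG.preconnected _ _)]
        exact hyzero
      have hxi : x' (i : Fin N) = x i := dif_pos i.2
      rw [← hxi, this]
      rfl
end
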